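/- arXiv:2302.13640 — 4 statements merged into one kernel-verified Lean document; each statement's English description precedes it below -/
import Mathlib

section
/- For every integer ℓ ≥ 3, the online Ramsey number satisfies 5 · r̃(P₄, P_{ℓ+1}) ≥ 7ℓ + 2, i.e. r̃(P₄, P_{ℓ+1}) ≥ (7ℓ+2)/5. -/
open SimpleGraph

/-- `H` is contained as a (not necessarily induced) subgraph of `G`,
i.e. `G` contains a copy of `H`. -/
def ContainsCopy {α V : Type*} (H : SimpleGraph α) (G : SimpleGraph V) : Prop :=
  ∃ f : α → V, Function.Injective f ∧ ∀ ⦃a b⦄, H.Adj a b → G.Adj (f a) (f b)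

/-- `BuilderWins G₁ G₂ R B t` : in the online Ramsey game on the infinite vertex set `ℕ`,
from the position in which the red edges drawn so far form `R` and the blue edges form `B`,
Builder can force, by drawing at most `t` further edges (each between two vertices not yet
joined, each colored red or blue by Painter immediately), the colored graph to contain
a red copy of `G₁` or a blue copy of `G₂`, whatever Painter does. -/
inductive BuilderWins {α β : Type*} (G₁ : SimpleGraph α) (G₂ : SimpleGraph β) :
    SimpleGraph ℕ → SimpleGraph ℕ → ℕ → Prop
  | red {R B : SimpleGraph ℕ} {t : ℕ} (h : ContainsCopy G₁ R) : BuilderWins G₁ G₂ R B t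
  | blue {R B : SimpleGraph ℕ} {t : ℕ} (h : ContainsCopy G₂ B) : BuilderWins G₁ G₂ R B t
  | draw {R B : SimpleGraph ℕ} {t : ℕ} (u v : ℕ) (hne : u ≠ v)
      (hR : ¬ R.Adj u v) (hB : ¬ B.Adj u v)
      (hred : BuilderWins G₁ G₂ (R ⊔ fromEdgeSet {s(u, v)}) B t)
      (hblue : BuilderWins G₁ G₂ R (B ⊔ fromEdgeSet {s(u, v)}) t) :
      BuilderWins G₁ G₂ R B (t + 1)

namespace OR
open Finset
open scoped Classical

def Used (R : SimpleGraph ℕ) (x : ℕ) : Prop := ∃ y, R.Adj x y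
def Big (R : SimpleGraph ℕ) (x : ℕ) : Prop := ∃ y z, R.Adj x y ∧ R.Adj x z ∧ y ≠ z
def Bad (R : SimpleGraph ℕ) (x : ℕ) : Prop := ∃ y z, R.Adj x y ∧ R.Adj y z ∧ z ≠ x
def Legal (R : SimpleGraph ℕ) (u v : ℕ) : Prop :=
  (Used R u ∧ Used R v) ∨ Bad R u ∨ Bad R v
def NoP4 (R : SimpleGraph ℕ) : Prop :=
  ∀ a b c d, R.Adj a b → R.Adj b c → R.Adj c d → a = c ∨ b = d ∨ a = d
def NoTri (R : SimpleGraph ℕ) : Prop :=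
  ∀ a b c, R.Adj a b → R.Adj b c → R.Adj c a → False

noncomputable def nbr (R : SimpleGraph ℕ) (x : ℕ) : ℕ :=
  if h : ∃ y, R.Adj x y then h.choose else x

lemma nbr_adj {R : SimpleGraph ℕ} {x : ℕ} (h : Used R x) : R.Adj x (nbr R x) := by
  have h' : ∃ y, R.Adj x y := h
  rw [nbr, dif_pos h']; exact h'.choose_spec

lemma nbr_unique {R : SimpleGraph ℕ} {x y : ℕ} (hb : ¬ Big R x) (h : R.Adj x y) :
    y = nbr R x := by
  by_contra hne
  exact hb ⟨y, nbr R x, h, nbr_adj ⟨y, h⟩, hne⟩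

noncomputable def av (R : SimpleGraph ℕ) (x : ℕ) : ℕ :=
  if Big R x then x else if Big R (nbr R x) then nbr R x else min x (nbr R x)

lemma bad_used {R : SimpleGraph ℕ} {x : ℕ} (h : Bad R x) : Used R x := by
  obtain ⟨y, z, h1, _, _⟩ := h; exact ⟨y, h1⟩

variable {R : SimpleGraph ℕ} (hP4 : NoP4 R) (hTri : NoTri R)

omit hP4 hTri in
include hP4 hTri in
lemma big_not_big_adj {x y : ℕ} (hxy : R.Adj x y) (hx : Big R x) : ¬ Big R y := by
  rintro ⟨z1, z2, hz1, hz2, hzne⟩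
  obtain ⟨w1, w2, hw1, hw2, hwne⟩ := hx
  -- some neighbor of x different from y
  have hw : ∃ w, R.Adj x w ∧ w ≠ y := by
    by_cases h1 : w1 = y
    · subst h1; exact ⟨w2, hw2, fun h => hwne h.symm⟩
    · exact ⟨w1, hw1, h1⟩
  obtain ⟨w, hw, hwy⟩ := hw
  have hz : ∃ z, R.Adj y z ∧ z ≠ x := by
    by_cases h1 : z1 = x
    · refine ⟨z2, hz2, ?_⟩; rintro rfl; exact hzne h1
    · exact ⟨z1, hz1, h1⟩
  obtain ⟨z, hz, hzx⟩ := hz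
  -- path w - x - y - z
  rcases hP4 w x y z hw.symm hxy hz with h | h | h
  · exact hwy h
  · exact hzx h.symm
  · subst h; exact hTri w x y hw.symm hxy hz

include hP4 hTri in
lemma bad_iff {x : ℕ} : Bad R x ↔ (Used R x ∧ ¬ Big R x ∧ Big R (nbr R x)) := by
  constructor
  · rintro ⟨y, z, hxy, hyz, hzx⟩
    have hby : Big R y := ⟨x, z, hxy.symm, hyz, fun h => hzx h.symm⟩
    have hbx : ¬ Big R x := big_not_big_adj hP4 hTri hxy.symm hby
    have := nbr_unique hbx hxy
    exact ⟨⟨y, hxy⟩, hbx, this ▸ hby⟩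
  · rintro ⟨hu, hbx, hbn⟩
    obtain ⟨z1, z2, h1, h2, hne⟩ := hbn
    by_cases h : z1 = x
    · exact ⟨nbr R x, z2, nbr_adj hu, h2, by rintro rfl; exact hne h⟩
    · exact ⟨nbr R x, z1, nbr_adj hu, h1, h⟩

include hP4 hTri in
lemma av_eq_of_adj {x y : ℕ} (hxy : R.Adj x y) : av R x = av R y := by
  have hux : Used R x := ⟨y, hxy⟩
  have huy : Used R y := ⟨x, hxy.symm⟩
  by_cases hx : Big R x
  · have hy : ¬ Big R y := big_not_big_adj hP4 hTri hxy hx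
    have hn : nbr R y = x := (nbr_unique hy hxy.symm).symm
    rw [av, if_pos hx, av, if_neg hy, hn, if_pos hx]
  · by_cases hy : Big R y
    · have hn : nbr R x = y := (nbr_unique hx hxy).symm
      rw [av, if_neg hx, hn, if_pos hy, av, if_pos hy]
    · have hnx : nbr R x = y := (nbr_unique hx hxy).symm
      have hny : nbr R y = x := (nbr_unique hy hxy.symm).symm
      rw [av, if_neg hx, hnx, if_neg hy, av, if_neg hy, hny, if_neg hx, min_comm]

lemma adj_av_of_ne {x : ℕ} (hu : Used R x) (hne : x ≠ av R x) : R.Adj x (av R x) := by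
  by_cases hx : Big R x
  · exfalso; exact hne (((by rw [av, if_pos hx]) : av R x = x)).symm
  · rw [av, if_neg hx]
    by_cases hy : Big R (nbr R x)
    · rw [if_pos hy]; exact nbr_adj hu
    · rw [if_neg hy]
      rcases min_cases x (nbr R x) with ⟨h, _⟩ | ⟨h, _⟩
      · exfalso; exact hne (((by rw [av, if_neg hx, if_neg hy, h]) : av R x = x)).symm
      · rw [h]; exact nbr_adj hu

include hP4 hTri in
lemma bad_av {x : ℕ} (hb : Bad R x) : av R x = nbr R x ∧ x ≠ av R x ∧ Big R (av R x) := by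
  obtain ⟨hu, hbx, hbn⟩ := (bad_iff hP4 hTri).mp hb
  have h1 : av R x = nbr R x := by rw [av, if_neg hbx, if_pos hbn]
  refine ⟨h1, ?_, h1 ▸ hbn⟩
  rw [h1]; intro h; exact R.irrefl (h ▸ nbr_adj hu : R.Adj (nbr R x) (nbr R x))



noncomputable def ea (R : SimpleGraph ℕ) : Sym2 ℕ → ℕ :=
  Sym2.lift ⟨fun a b => av R (min a b), fun a b => by show av R (min a b) = av R (min b a); rw [min_comm]⟩

include hP4 hTri in
lemma ea_eq {x y : ℕ} (h : R.Adj x y) : ea R s(x, y) = av R x := by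
  show av R (min x y) = av R x
  rcases min_cases x y with ⟨h1, _⟩ | ⟨h1, _⟩
  · rw [h1]
  · rw [h1]; exact (av_eq_of_adj hP4 hTri h).symm

omit hP4 hTri in
lemma av_big {x : ℕ} (hx : Big R x) : av R x = x := by rw [av, if_pos hx]

include hP4 hTri in
lemma core (E : Finset (Sym2 ℕ)) (hE : ∀ e, e ∈ E ↔ e ∈ R.edgeSet)
    (ℓ : ℕ) (hl : 1 ≤ ℓ) (g : ℕ → ℕ)
    (hinj : ∀ i, i ≤ ℓ → ∀ j, j ≤ ℓ → g i = g j → i = j)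
    (hleg : ∀ i, i < ℓ → Legal R (g i) (g (i+1))) :
    2 * ℓ + 2 ≤ 5 * E.card := by
  classical
  have hmem : ∀ {x y : ℕ}, R.Adj x y → s(x, y) ∈ E := fun h => (hE _).mpr h
  set W : Finset ℕ := E.image (ea R) with hWdef
  have hWav : ∀ x, Used R x → av R x ∈ W := by
    intro x hu
    have hadj := nbr_adj hu
    have : ea R s(x, nbr R x) = av R x := ea_eq hP4 hTri hadj
    exact this ▸ mem_image_of_mem _ (hmem hadj)
  -- fiber counts
  set kw : ℕ → ℕ := fun w => (E.filter (fun e => ea R e = w)).card with hkw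
  set Bs : Finset ℕ := (range (ℓ+1)).filter (fun i => Bad R (g i)) with hBs
  set X : Finset ℕ := (range (ℓ+1)).filter (fun i => Used R (g i) ∧ ¬ Bad R (g i)) with hX
  set bw : ℕ → ℕ := fun w => (Bs.filter (fun i => av R (g i) = w)).card with hbw
  set xw : ℕ → ℕ := fun w => (X.filter (fun i => av R (g i) = w)).card with hxw
  -- anchored used positions bound : xw w + bw w ≤ kw w + 1
  have hqk : ∀ w, xw w + bw w ≤ kw w + 1 := by
    intro w
    set U2 : Finset ℕ := (range (ℓ+1)).filter
      (fun i => Used R (g i) ∧ av R (g i) = w ∧ g i ≠ w) with hU2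
    set U1 : Finset ℕ := (range (ℓ+1)).filter
      (fun i => Used R (g i) ∧ av R (g i) = w ∧ g i = w) with hU1
    have hsub : (X.filter (fun i => av R (g i) = w)) ∪ (Bs.filter (fun i => av R (g i) = w))
        ⊆ U1 ∪ U2 := by
      intro i hi
      rcases mem_union.mp hi with hi | hi
      · simp only [hX, mem_filter, mem_range] at hi
        by_cases hgi : g i = w
        · refine mem_union_left _ ?_
          simp only [hU1, mem_filter, mem_range]
          exact ⟨hi.1.1, hi.1.2.1, hi.2, hgi⟩
        · refine mem_union_right _ ?_
          simp only [hU2, mem_filter, mem_range]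
          exact ⟨hi.1.1, hi.1.2.1, hi.2, hgi⟩
      · simp only [hBs, mem_filter, mem_range] at hi
        by_cases hgi : g i = w
        · refine mem_union_left _ ?_
          simp only [hU1, mem_filter, mem_range]
          exact ⟨hi.1.1, bad_used hi.1.2, hi.2, hgi⟩
        · refine mem_union_right _ ?_
          simp only [hU2, mem_filter, mem_range]
          exact ⟨hi.1.1, bad_used hi.1.2, hi.2, hgi⟩
    have hdisj : Disjoint (X.filter (fun i => av R (g i) = w))
        (Bs.filter (fun i => av R (g i) = w)) := by
      rw [Finset.disjoint_left]
      intro i hi1 hi2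
      simp only [hX, mem_filter] at hi1
      simp only [hBs, mem_filter] at hi2
      exact hi1.1.2.2 hi2.1.2
    have h1 : U1.card ≤ 1 := by
      rw [Finset.card_le_one]
      intro i hi j hj
      simp only [hU1, mem_filter, mem_range] at hi hj
      obtain ⟨hir, -, -, hgi⟩ := hi
      obtain ⟨hjr, -, -, hgj⟩ := hj
      exact hinj i (by omega) j (by omega) (hgi.trans hgj.symm)
    have h2 : U2.card ≤ kw w := by
      apply Finset.card_le_card_of_injOn (fun i => s(g i, w))
      · intro i hi
        simp only [hU2, Finset.mem_coe, mem_filter, mem_range] at hi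
        obtain ⟨hir, hu, hav, hne⟩ := hi
        have hadj : R.Adj (g i) w := hav ▸ adj_av_of_ne hu (fun h => hne (hav ▸ h))
        simp only [hkw, Finset.mem_coe, mem_filter]
        exact ⟨hmem hadj, (ea_eq hP4 hTri hadj).trans hav⟩
      · intro i hi j hj hij
        simp only [hU2, Finset.mem_coe, mem_filter, mem_range, Set.mem_setOf_eq] at hi hj
        obtain ⟨hir, -, -, hgi⟩ := hi
        obtain ⟨hjr, -, -, hgj⟩ := hj
        rcases Sym2.eq_iff.mp hij with ⟨h, _⟩ | ⟨h, h'⟩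
        · exact hinj i (by omega) j (by omega) h
        · exact absurd h hgi
    calc xw w + bw w = ((X.filter (fun i => av R (g i) = w)) ∪
          (Bs.filter (fun i => av R (g i) = w))).card := (card_union_of_disjoint hdisj).symm
      _ ≤ (U1 ∪ U2).card := card_le_card hsub
      _ ≤ U1.card + U2.card := card_union_le _ _
      _ ≤ kw w + 1 := by omega
  -- bw w ≤ kw w
  have hbk : ∀ w, bw w ≤ kw w := by
    intro w
    apply Finset.card_le_card_of_injOn (fun i => s(g i, w))
    · intro i hi
      simp only [hbw, hBs, Finset.mem_coe, mem_filter, mem_range] at hi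
      obtain ⟨⟨hir, hbad⟩, hav⟩ := hi
      obtain ⟨-, hne, -⟩ := bad_av hP4 hTri hbad
      have hadj : R.Adj (g i) w := hav ▸ adj_av_of_ne (bad_used hbad) hne
      simp only [hkw, Finset.mem_coe, mem_filter]
      exact ⟨hmem hadj, (ea_eq hP4 hTri hadj).trans hav⟩
    · intro i hi j hj hij
      simp only [hbw, hBs, Finset.mem_coe, mem_filter, mem_range] at hi hj
      obtain ⟨⟨hir, hbadi⟩, havi⟩ := hi
      obtain ⟨⟨hjr, hbadj⟩, havj⟩ := hj
      rcases Sym2.eq_iff.mp hij with ⟨h, _⟩ | ⟨h, h'⟩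
      · exact hinj i (by omega) j (by omega) h
      · obtain ⟨-, hne, -⟩ := bad_av hP4 hTri hbadi
        exact absurd (h.trans havi.symm) hne
  -- kw ≥ 1 on W
  have hk1 : ∀ w ∈ W, 1 ≤ kw w := by
    intro w hw
    obtain ⟨e, he, hee⟩ := mem_image.mp hw
    have : e ∈ E.filter (fun e => ea R e = w) := mem_filter.mpr ⟨he, hee⟩
    exact card_pos.mpr ⟨e, this⟩
  -- bw ≥ 1 → kw ≥ 2
  have hk2 : ∀ w, 1 ≤ bw w → 2 ≤ kw w := by
    intro w hb
    obtain ⟨i, hi⟩ := card_pos.mp hb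
    simp only [hbw, hBs, mem_filter, mem_range] at hi
    obtain ⟨⟨hir, hbad⟩, hav⟩ := hi
    obtain ⟨-, -, hbig⟩ := bad_av hP4 hTri hbad
    rw [hav] at hbig
    have havw : av R w = w := av_big hbig
    obtain ⟨y, z, hy, hz, hyz⟩ := hbig
    have h1 : s(w, y) ∈ E.filter (fun e => ea R e = w) :=
      mem_filter.mpr ⟨hmem hy, (ea_eq hP4 hTri hy).trans havw⟩
    have h2 : s(w, z) ∈ E.filter (fun e => ea R e = w) :=
      mem_filter.mpr ⟨hmem hz, (ea_eq hP4 hTri hz).trans havw⟩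
    have hne : s(w, y) ≠ s(w, z) := by
      intro h
      rcases Sym2.eq_iff.mp h with ⟨_, h⟩ | ⟨h, h'⟩
      · exact hyz h
      · exact R.irrefl (h' ▸ hy)
    exact Finset.one_lt_card.mpr ⟨_, h1, _, h2, hne⟩
  -- edge partition
  have hEcard : E.card = ∑ w ∈ W, kw w :=
    card_eq_sum_card_fiberwise (fun e he => mem_image_of_mem _ he)
  -- S / T split of path edges
  set T : Finset ℕ := (range ℓ).filter (fun j => ¬ Bad R (g j) ∧ ¬ Bad R (g (j+1))) with hT
  set S : Finset ℕ := (range ℓ).filter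
    (fun j => ¬ (¬ Bad R (g j) ∧ ¬ Bad R (g (j+1)))) with hS
  have hST : T.card + S.card = ℓ := by
    have := card_filter_add_card_filter_not
      (s := range ℓ) (p := fun j => ¬ Bad R (g j) ∧ ¬ Bad R (g (j+1)))
    rw [hT, hS]
    rw [card_range] at this
    exact this
  -- blame map
  set β : ℕ → ℕ := fun j => if Bad R (g j) then j else j + 1 with hβ
  have hβmem : ∀ j ∈ S, (β j ∈ Bs ∧ β j ≤ ℓ) := by
    intro j hj
    simp only [hS, mem_filter, mem_range, not_and_or, not_not] at hj
    by_cases hb : Bad R (g j)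
    · constructor
      · simp only [hBs, mem_filter, mem_range, hβ, if_pos hb]; exact ⟨by omega, hb⟩
      · simp only [hβ, if_pos hb]; omega
    · have hb2 : Bad R (g (j + 1)) := by tauto
      constructor
      · simp only [hBs, mem_filter, mem_range, hβ, if_neg hb]; exact ⟨by omega, hb2⟩
      · simp only [hβ, if_neg hb]; omega
  have hScard : S.card = ∑ w ∈ W, (S.filter (fun j => av R (g (β j)) = w)).card := by
    apply card_eq_sum_card_fiberwise
    intro j hj
    have := hβmem j hj
    simp only [hBs, mem_filter, mem_range] at this
    exact hWav _ (bad_used this.1.2)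
  have hSw : ∀ w, (S.filter (fun j => av R (g (β j)) = w)).card ≤ 2 * bw w := by
    intro w
    calc (S.filter (fun j => av R (g (β j)) = w)).card
        ≤ 2 * ((S.filter (fun j => av R (g (β j)) = w)).image β).card := by
          apply card_le_mul_card_image
          intro a ha
          have hsub : ((S.filter (fun j => av R (g (β j)) = w)).filter (fun x => β x = a))
              ⊆ {a - 1, a} := by
            intro j hj
            simp only [mem_filter] at hj
            have : β j = a := hj.2
            simp only [hβ] at this
            simp only [mem_insert, mem_singleton]
            by_cases hb : Bad R (g j)
            · rw [if_pos hb] at this; right; exact this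
            · rw [if_neg hb] at this; left; omega
          calc _ ≤ ({a - 1, a} : Finset ℕ).card := card_le_card hsub
            _ ≤ 2 := by
              refine le_trans (card_insert_le _ _) ?_
              simp
      _ ≤ 2 * bw w := by
          apply Nat.mul_le_mul_left
          apply card_le_card
          intro a ha
          obtain ⟨j, hj, hja⟩ := mem_image.mp ha
          simp only [mem_filter] at hj
          simp only [hbw, mem_filter]
          exact ⟨hja ▸ (hβmem j hj.1).1, hja ▸ hj.2⟩
  by_cases hXne : X.Nonempty
  · -- Case A
    have hXcard : X.card = ∑ w ∈ W, xw w := by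
      apply card_eq_sum_card_fiberwise
      intro i hi
      simp only [hX, Finset.mem_coe, mem_filter] at hi
      exact hWav _ hi.2.1
    have hTX : T.card + 1 ≤ X.card := by
      set m := X.min' hXne with hm
      have hmX : m ∈ X := X.min'_mem hXne
      have h1 : T.card ≤ (X.erase m).card := by
        apply Finset.card_le_card_of_injOn (fun j => j + 1)
        · intro j hj
          simp only [hT, Finset.mem_coe, mem_filter, mem_range] at hj
          obtain ⟨hjr, hb1, hb2⟩ := hj
          have hlegj := hleg j hjr
          have hused : Used R (g j) ∧ Used R (g (j+1)) := by
            rcases hlegj with h | h | h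
            · exact h
            · exact absurd h hb1
            · exact absurd h hb2
          have hjX : j ∈ X := by
            simp only [hX, mem_filter, mem_range]; exact ⟨by omega, hused.1, hb1⟩
          have hj1X : j + 1 ∈ X := by
            simp only [hX, mem_filter, mem_range]; exact ⟨by omega, hused.2, hb2⟩
          refine mem_erase.mpr ⟨?_, hj1X⟩
          have := X.min'_le j hjX
          show j + 1 ≠ m
          omega
        · intro i _ j _ h
          have : i + 1 = j + 1 := h
          omega
      have h2 := Finset.card_erase_of_mem hmX
      have h3 : 1 ≤ X.card := card_pos.mpr hXne
      omega
    have hmain : ∑ w ∈ W, (2 * (S.filter (fun j => av R (g (β j)) = w)).card + 2 * xw w)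
        ≤ ∑ w ∈ W, 5 * kw w := by
      apply Finset.sum_le_sum
      intro w hw
      have := hSw w
      have := hqk w
      have := hbk w
      have := hk1 w hw
      have h2 := hk2 w
      omega
    calc 2 * ℓ + 2 = 2 * S.card + 2 * (T.card + 1) := by omega
      _ ≤ 2 * S.card + 2 * X.card := by omega
      _ = ∑ w ∈ W, (2 * (S.filter (fun j => av R (g (β j)) = w)).card + 2 * xw w) := by
          rw [hScard, hXcard, Finset.mul_sum, Finset.mul_sum, ← Finset.sum_add_distrib]
      _ ≤ ∑ w ∈ W, 5 * kw w := hmain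
      _ = 5 * E.card := by rw [hEcard, Finset.mul_sum]
  · -- Case B : X = ∅
    have hXempty : X = ∅ := not_nonempty_iff_eq_empty.mp hXne
    have hTempty : T = ∅ := by
      rw [eq_empty_iff_forall_notMem]
      intro j hj
      simp only [hT, mem_filter, mem_range] at hj
      obtain ⟨hjr, hb1, hb2⟩ := hj
      have hlegj := hleg j hjr
      have hused : Used R (g j) := by
        rcases hlegj with h | h | h
        · exact h.1
        · exact absurd h hb1
        · exact absurd h hb2
      have : j ∈ X := by
        simp only [hX, mem_filter, mem_range]; exact ⟨by omega, hused, hb1⟩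
      rw [hXempty] at this
      exact notMem_empty _ this
    have hSl : S.card = ℓ := by rw [hTempty] at hST; simpa using hST
    have hSne : S.Nonempty := by
      rw [← card_pos, hSl]; omega
    obtain ⟨j₀, hj₀⟩ := hSne
    set w₀ := av R (g (β j₀)) with hw₀
    have hw₀W : w₀ ∈ W := by
      have := (hβmem j₀ hj₀).1
      simp only [hBs, mem_filter, mem_range] at this
      exact hWav _ (bad_used this.2)
    have hbw₀ : 1 ≤ bw w₀ := by
      apply card_pos.mpr
      refine ⟨β j₀, mem_filter.mpr ⟨(hβmem j₀ hj₀).1, rfl⟩⟩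
    have hmain : ∑ w ∈ W, (2 * (S.filter (fun j => av R (g (β j)) = w)).card +
        (if w = w₀ then 2 else 0)) ≤ ∑ w ∈ W, 5 * kw w := by
      apply Finset.sum_le_sum
      intro w hw
      have := hSw w
      have := hbk w
      have := hk1 w hw
      have h2 := hk2 w
      by_cases hww : w = w₀
      · subst hww
        rw [if_pos rfl]
        omega
      · simp only [if_neg hww]
        omega
    calc 2 * ℓ + 2 = 2 * S.card + 2 := by omega
      _ = ∑ w ∈ W, (2 * (S.filter (fun j => av R (g (β j)) = w)).card +
            (if w = w₀ then 2 else 0)) := by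
          rw [Finset.sum_add_distrib, Finset.sum_ite_eq' W w₀ (fun _ => 2), if_pos hw₀W,
            hScard, Finset.mul_sum]
      _ ≤ ∑ w ∈ W, 5 * kw w := hmain
      _ = 5 * E.card := by rw [hEcard, Finset.mul_sum]



omit hP4 hTri in
lemma used_mono {R' : SimpleGraph ℕ} (hle : R ≤ R') {x : ℕ} (h : Used R x) : Used R' x := by
  obtain ⟨y, hy⟩ := h; exact ⟨y, hle hy⟩

omit hP4 hTri in
lemma bad_mono {R' : SimpleGraph ℕ} (hle : R ≤ R') {x : ℕ} (h : Bad R x) : Bad R' x := by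
  obtain ⟨y, z, h1, h2, h3⟩ := h; exact ⟨y, z, hle h1, hle h2, h3⟩

omit hP4 hTri in
lemma legal_mono {R' : SimpleGraph ℕ} (hle : R ≤ R') {x y : ℕ} (h : Legal R x y) :
    Legal R' x y := by
  rcases h with ⟨h1, h2⟩ | h | h
  · exact Or.inl ⟨used_mono hle h1, used_mono hle h2⟩
  · exact Or.inr (Or.inl (bad_mono hle h))
  · exact Or.inr (Or.inr (bad_mono hle h))

include hP4 hTri in
lemma extract {u v : ℕ} (hne : u ≠ v)
    (h : ¬ (NoP4 (R ⊔ fromEdgeSet {s(u,v)}) ∧ NoTri (R ⊔ fromEdgeSet {s(u,v)}))) :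
    Legal R u v := by
  have hadj : ∀ x y : ℕ, (R ⊔ fromEdgeSet {s(u,v)}).Adj x y ↔
      R.Adj x y ∨ (s(x,y) = s(u,v) ∧ x ≠ y) := by
    intro x y
    rw [sup_adj, fromEdgeSet_adj]
    simp
  rw [not_and_or] at h
  rcases h with h | h
  · unfold NoP4 at h
    push_neg at h
    obtain ⟨a, b, c, d, h1, h2, h3, hac, hbd, had⟩ := h
    rw [hadj] at h1 h2 h3
    rcases h1 with h1 | ⟨h1, hab⟩
    · rcases h2 with h2 | ⟨h2, hbc⟩
      · rcases h3 with h3 | ⟨h3, hcd⟩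
        · rcases hP4 a b c d h1 h2 h3 with h | h | h
          exacts [absurd h hac, absurd h hbd, absurd h had]
        · have hbadc : Bad R c := ⟨b, a, h2.symm, h1.symm, hac⟩
          rcases Sym2.eq_iff.mp h3 with ⟨hc, hd⟩ | ⟨hc, hd⟩
          · exact Or.inr (Or.inl (hc ▸ hbadc))
          · exact Or.inr (Or.inr (hc ▸ hbadc))
      · rcases h3 with h3 | ⟨h3, hcd⟩
        · have hub : Used R b := ⟨a, h1.symm⟩
          have huc : Used R c := ⟨d, h3⟩
          rcases Sym2.eq_iff.mp h2 with ⟨hb, hc⟩ | ⟨hb, hc⟩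
          · exact Or.inl ⟨hb ▸ hub, hc ▸ huc⟩
          · exact Or.inl ⟨hc ▸ huc, hb ▸ hub⟩
        · have he : s(b, c) = s(c, d) := h2.trans h3.symm
          rcases Sym2.eq_iff.mp he with ⟨hb, hc⟩ | ⟨hb, hc⟩
          · exact absurd hb hbc
          · exact absurd hb hbd
    · rcases h2 with h2 | ⟨h2, hbc⟩
      · rcases h3 with h3 | ⟨h3, hcd⟩
        · have hbadb : Bad R b := ⟨c, d, h2, h3, fun hh => hbd hh.symm⟩
          rcases Sym2.eq_iff.mp h1 with ⟨ha, hb⟩ | ⟨ha, hb⟩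
          · exact Or.inr (Or.inr (hb ▸ hbadb))
          · exact Or.inr (Or.inl (hb ▸ hbadb))
        · have he : s(a, b) = s(c, d) := h1.trans h3.symm
          rcases Sym2.eq_iff.mp he with ⟨ha, hb⟩ | ⟨ha, hb⟩
          · exact absurd ha hac
          · exact absurd ha had
      · have he : s(a, b) = s(b, c) := h1.trans h2.symm
        rcases Sym2.eq_iff.mp he with ⟨ha, hb⟩ | ⟨ha, hb⟩
        · exact absurd ha hab
        · exact absurd ha hac
  · unfold NoTri at h
    push_neg at h
    obtain ⟨a, b, c, h1, h2, h3⟩ := h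
    rw [hadj] at h1 h2 h3
    rcases h1 with h1 | ⟨h1, hab⟩
    · rcases h2 with h2 | ⟨h2, hbc⟩
      · rcases h3 with h3 | ⟨h3, hca⟩
        · exact absurd h3 (fun hh => hTri a b c h1 h2 hh)
        · have huc : Used R c := ⟨b, h2.symm⟩
          have hua : Used R a := ⟨b, h1⟩
          rcases Sym2.eq_iff.mp h3 with ⟨hc, ha⟩ | ⟨hc, ha⟩
          · exact Or.inl ⟨hc ▸ huc, ha ▸ hua⟩
          · exact Or.inl ⟨ha ▸ hua, hc ▸ huc⟩
      · rcases h3 with h3 | ⟨h3, hca⟩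
        · have hub : Used R b := ⟨a, h1.symm⟩
          have huc : Used R c := ⟨a, h3⟩
          rcases Sym2.eq_iff.mp h2 with ⟨hb, hc⟩ | ⟨hb, hc⟩
          · exact Or.inl ⟨hb ▸ hub, hc ▸ huc⟩
          · exact Or.inl ⟨hc ▸ huc, hb ▸ hub⟩
        · have he : s(b, c) = s(c, a) := h2.trans h3.symm
          rcases Sym2.eq_iff.mp he with ⟨hb, hc⟩ | ⟨hb, hc⟩
          · exact absurd hb hbc
          · exact absurd (hb ▸ h1 : R.Adj a a) (R.irrefl)
    · rcases h2 with h2 | ⟨h2, hbc⟩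
      · rcases h3 with h3 | ⟨h3, hca⟩
        · have hua : Used R a := ⟨c, h3.symm⟩
          have hub : Used R b := ⟨c, h2⟩
          rcases Sym2.eq_iff.mp h1 with ⟨ha, hb⟩ | ⟨ha, hb⟩
          · exact Or.inl ⟨ha ▸ hua, hb ▸ hub⟩
          · exact Or.inl ⟨hb ▸ hub, ha ▸ hua⟩
        · have he : s(a, b) = s(c, a) := h1.trans h3.symm
          rcases Sym2.eq_iff.mp he with ⟨ha, hb⟩ | ⟨ha, hb⟩
          · rw [hb, ← ha] at h2
            exact absurd h2 (R.irrefl)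
          · exact absurd (hb ▸ h2 : R.Adj c c) (R.irrefl)
      · have he : s(a, b) = s(b, c) := h1.trans h2.symm
        rcases Sym2.eq_iff.mp he with ⟨ha, hb⟩ | ⟨ha, hb⟩
        · exact absurd ha hab
        · rcases h3 with h3 | ⟨h3, hca⟩
          · exact absurd (ha ▸ h3 : R.Adj c c) (R.irrefl)
          · exact absurd ha.symm hca

omit hP4 hTri in
lemma no_red_P4 (hP4' : NoP4 R) (h : ContainsCopy (SimpleGraph.pathGraph 4) R) : False := by
  obtain ⟨f, hfi, hfa⟩ := h
  have h01 : (SimpleGraph.pathGraph 4).Adj 0 1 := by rw [pathGraph_adj]; left; rfl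
  have h12 : (SimpleGraph.pathGraph 4).Adj 1 2 := by rw [pathGraph_adj]; left; rfl
  have h23 : (SimpleGraph.pathGraph 4).Adj 2 3 := by rw [pathGraph_adj]; left; rfl
  rcases hP4' _ _ _ _ (hfa h01) (hfa h12) (hfa h23) with h | h | h
  · exact absurd (hfi h) (by decide)
  · exact absurd (hfi h) (by decide)
  · exact absurd (hfi h) (by decide)

def Inv (R B : SimpleGraph ℕ) : Prop :=
  R.edgeSet.Finite ∧ B.edgeSet.Finite ∧ NoP4 R ∧ NoTri R ∧
    ∀ x y, B.Adj x y → Legal R x y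

omit hP4 hTri in
lemma count {B : SimpleGraph ℕ} (ℓ : ℕ) (hl : 1 ≤ ℓ) (hinv : Inv R B)
    (h : ContainsCopy (SimpleGraph.pathGraph (ℓ + 1)) B) :
    7 * ℓ + 2 ≤ 5 * (R.edgeSet.ncard + B.edgeSet.ncard) := by
  classical
  obtain ⟨hfR, hfB, hP4', hTri', hleg⟩ := hinv
  obtain ⟨f, hfi, hfa⟩ := h
  set g : ℕ → ℕ := fun i => f ⟨min i ℓ, Nat.lt_succ_of_le (Nat.min_le_right _ _)⟩ with hg
  have hg_eq : ∀ i (hi : i ≤ ℓ), g i = f ⟨i, Nat.lt_succ_of_le hi⟩ := by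
    intro i hi
    simp only [hg]
    congr 1
    exact Fin.ext (by simp [Nat.min_eq_left hi])
  have hBadj : ∀ i, i < ℓ → B.Adj (g i) (g (i + 1)) := by
    intro i hi
    rw [hg_eq i (by omega), hg_eq (i+1) (by omega)]
    apply hfa
    rw [pathGraph_adj]
    left
    rfl
  have hinj : ∀ i, i ≤ ℓ → ∀ j, j ≤ ℓ → g i = g j → i = j := by
    intro i hi j hj hij
    rw [hg_eq i hi, hg_eq j hj] at hij
    have := hfi hij
    exact Fin.mk.injEq _ _ _ _ ▸ (by injection this)
  have hlegal : ∀ i, i < ℓ → Legal R (g i) (g (i + 1)) := fun i hi => hleg _ _ (hBadj i hi)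
  -- red bound
  have hred : 2 * ℓ + 2 ≤ 5 * R.edgeSet.ncard := by
    have hE : ∀ e, e ∈ hfR.toFinset ↔ e ∈ R.edgeSet := fun e => Set.Finite.mem_toFinset _
    have := core hP4' hTri' hfR.toFinset hE ℓ hl g hinj hlegal
    rwa [Set.ncard_eq_toFinset_card _ hfR]
  -- blue bound
  have hblue : ℓ ≤ B.edgeSet.ncard := by
    have hsub : (Finset.range ℓ).image (fun j => s(g j, g (j+1))) ⊆ hfB.toFinset := by
      intro e he
      obtain ⟨j, hj, rfl⟩ := Finset.mem_image.mp he
      rw [Finset.mem_range] at hj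
      rw [Set.Finite.mem_toFinset]
      exact hBadj j hj
    have hcard : ((Finset.range ℓ).image (fun j => s(g j, g (j+1)))).card = ℓ := by
      rw [Finset.card_image_of_injOn, Finset.card_range]
      intro i hi j hj hij
      simp only [Finset.coe_range, Set.mem_Iio] at hi hj
      rcases Sym2.eq_iff.mp hij with ⟨h1, h2⟩ | ⟨h1, h2⟩
      · exact hinj i (by omega) j (by omega) h1
      · have e1 : i = j + 1 := hinj i (by omega) (j+1) (by omega) h1
        have e2 : i + 1 = j := hinj (i+1) (by omega) j (by omega) h2
        omega
    calc ℓ = ((Finset.range ℓ).image (fun j => s(g j, g (j+1)))).card := hcard.symm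
      _ ≤ hfB.toFinset.card := Finset.card_le_card hsub
      _ = B.edgeSet.ncard := (Set.ncard_eq_toFinset_card _ hfB).symm
  omega

omit hP4 hTri in
lemma edgeSet_add {u v : ℕ} (hne : u ≠ v) :
    (R ⊔ fromEdgeSet {s(u,v)}).edgeSet = insert s(u,v) R.edgeSet := by
  rw [edgeSet_sup, edgeSet_fromEdgeSet]
  have h1 : ({s(u,v)} : Set (Sym2 ℕ)) \ {e : Sym2 ℕ | e.IsDiag} = {s(u,v)} := by
    ext e
    simp only [Set.mem_diff, Set.mem_singleton_iff, Set.mem_setOf_eq]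
    constructor
    · rintro ⟨h1, -⟩; exact h1
    · rintro rfl
      refine ⟨rfl, ?_⟩
      rw [Sym2.isDiag_iff_proj_eq]
      exact hne
  rw [Sym2.diagSet_eq_setOfPred_isDiag, h1, Set.union_singleton]

omit hP4 hTri in
lemma key (ℓ : ℕ) (hl : 1 ≤ ℓ) :
    ∀ {R B : SimpleGraph ℕ} {t : ℕ},
      BuilderWins (SimpleGraph.pathGraph 4) (SimpleGraph.pathGraph (ℓ + 1)) R B t →
      Inv R B → 7 * ℓ + 2 ≤ 5 * (R.edgeSet.ncard + B.edgeSet.ncard) + 5 * t := by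
  intro R B t h
  induction h with
  | @red R B t h =>
      intro hinv
      exact absurd h (fun hh => no_red_P4 hinv.2.2.1 hh)
  | @blue R B t h =>
      intro hinv
      have := count ℓ hl hinv h
      omega
  | @draw R B t u v hne hR hB hred hblue ih1 ih2 =>
      intro hinv
      obtain ⟨hfR, hfB, hP4', hTri', hleg⟩ := hinv
      by_cases hc : NoP4 (R ⊔ fromEdgeSet {s(u,v)}) ∧ NoTri (R ⊔ fromEdgeSet {s(u,v)})
      · -- painter colors red
        have hE : (R ⊔ fromEdgeSet {s(u,v)}).edgeSet = insert s(u,v) R.edgeSet :=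
          edgeSet_add hne
        have hfR' : (R ⊔ fromEdgeSet {s(u,v)}).edgeSet.Finite := by
          rw [hE]; exact hfR.insert _
        have hinv' : Inv (R ⊔ fromEdgeSet {s(u,v)}) B :=
          ⟨hfR', hfB, hc.1, hc.2,
            fun x y hxy => legal_mono le_sup_left (hleg x y hxy)⟩
        have hn : (R ⊔ fromEdgeSet {s(u,v)}).edgeSet.ncard = R.edgeSet.ncard + 1 := by
          rw [hE]
          exact Set.ncard_insert_of_notMem (fun hh => hR (mem_edgeSet R |>.mp hh)) hfR
        have := ih1 hinv'
        rw [hn] at this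
        omega
      · -- painter colors blue
        have hE : (B ⊔ fromEdgeSet {s(u,v)}).edgeSet = insert s(u,v) B.edgeSet :=
          edgeSet_add hne
        have hfB' : (B ⊔ fromEdgeSet {s(u,v)}).edgeSet.Finite := by
          rw [hE]; exact hfB.insert _
        have hlegaluv : Legal R u v := extract hP4' hTri' hne hc
        have hinv' : Inv R (B ⊔ fromEdgeSet {s(u,v)}) := by
          refine ⟨hfR, hfB', hP4', hTri', ?_⟩
          intro x y hxy
          rcases (sup_adj _ _ _ _).mp hxy with hxy | hxy
          · exact hleg x y hxy
          · rw [fromEdgeSet_adj, Set.mem_singleton_iff] at hxy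
            rcases Sym2.eq_iff.mp hxy.1 with ⟨hx, hy⟩ | ⟨hx, hy⟩
            · subst hx; subst hy; exact hlegaluv
            · subst hx; subst hy
              rcases hlegaluv with ⟨hu1, hu2⟩ | hb | hb
              · exact Or.inl ⟨hu2, hu1⟩
              · exact Or.inr (Or.inr hb)
              · exact Or.inr (Or.inl hb)
        have hn : (B ⊔ fromEdgeSet {s(u,v)}).edgeSet.ncard = B.edgeSet.ncard + 1 := by
          rw [hE]
          exact Set.ncard_insert_of_notMem (fun hh => hB (mem_edgeSet B |>.mp hh)) hfB
        have := ih2 hinv'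
        rw [hn] at this
        omega

end OR

/-- For every integer `ℓ ≥ 3`, `5 · r̃(P₄, P_{ℓ+1}) ≥ 7ℓ + 2`: every number of rounds `N`
within which Builder can force a red `P₄` or a blue `P_{ℓ+1}` satisfies `5N ≥ 7ℓ + 2`. -/
theorem onlineRamsey_P4_path_lower (ℓ : ℕ) (hℓ : 3 ≤ ℓ) :
    ∀ N : ℕ, BuilderWins (pathGraph 4) (pathGraph (ℓ + 1)) ⊥ ⊥ N → 7 * ℓ + 2 ≤ 5 * N := by
  intro N h
  have hinv : OR.Inv ⊥ ⊥ := by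
    refine ⟨?_, ?_, ?_, ?_, ?_⟩
    · rw [edgeSet_bot]; exact Set.finite_empty
    · rw [edgeSet_bot]; exact Set.finite_empty
    · intro a b c d h1; exact absurd h1 (by simp)
    · intro a b c h1 h2 h3; exact absurd h1 (by simp)
    · intro x y hxy; exact absurd hxy (by simp)
  have hk := OR.key ℓ (by omega) h hinv
  rw [edgeSet_bot] at hk
  simp only [Set.ncard_empty] at hk
  omega
end

section
/- Suppose that at some position of the online Ramsey game the colored graph built so far consists of (at least) the following two vertex-disjoint colored graphs: a blue path x₁x₂x₃x₄x₅ on 5 vertices, and a graph on distinct vertices v₀,v₁,v₂,v₃,v₄ in which the path v₀v₁v₄v₃ is blue and the path v₁v₂v₃ is red. Then Builder can, by drawing at most three further edges (each colored red or blue by Painter immediately), force the colored graph to contain either a red path on 4 vertices or a blue path on 10 vertices. -/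
open SimpleGraph

theorem BuilderWins.mono {α β : Type*} {G₁ : SimpleGraph α} {G₂ : SimpleGraph β}
    {R B : SimpleGraph ℕ} {t t' : ℕ} (h : BuilderWins G₁ G₂ R B t) (ht : t ≤ t') :
    BuilderWins G₁ G₂ R B t' := by
  induction h generalizing t' with
  | red h => exact .red h
  | blue h => exact .blue h
  | draw u v hne hR hB hred hblue ih1 ih2 =>
    obtain ⟨t'', rfl⟩ : ∃ t'', t' = t'' + 1 := ⟨t' - 1, by omega⟩
    exact .draw u v hne hR hB (ih1 (by omega)) (ih2 (by omega))

/-- A convenient version of the `draw` move that does not require the edge to be absent: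
if the edge is already present, the corresponding branch of the strategy still applies. -/
theorem BuilderWins.draw' {α β : Type*} {G₁ : SimpleGraph α} {G₂ : SimpleGraph β}
    {R B : SimpleGraph ℕ} {t : ℕ} (u v : ℕ) (hne : u ≠ v)
    (hred : BuilderWins G₁ G₂ (R ⊔ fromEdgeSet {s(u, v)}) B t)
    (hblue : BuilderWins G₁ G₂ R (B ⊔ fromEdgeSet {s(u, v)}) t) :
    BuilderWins G₁ G₂ R B (t + 1) := by
  have key : ∀ G : SimpleGraph ℕ, G.Adj u v → fromEdgeSet {s(u, v)} ≤ G := by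
    intro G hG a b hab
    rw [fromEdgeSet_adj] at hab
    obtain ⟨hs, -⟩ := hab
    simp only [Set.mem_singleton_iff, Sym2.eq, Sym2.rel_iff', Prod.mk.injEq,
      Prod.swap_prod_mk] at hs
    rcases hs with ⟨rfl, rfl⟩ | ⟨rfl, rfl⟩
    · exact hG
    · exact hG.symm
  by_cases hR : R.Adj u v
  · rw [sup_eq_left.mpr (key R hR)] at hred
    exact hred.mono (by omega)
  by_cases hB : B.Adj u v
  · rw [sup_eq_left.mpr (key B hB)] at hblue
    exact hblue.mono (by omega)
  exact .draw u v hne hR hB hred hblue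

/-- A nodup list of `n` vertices forming a path in `G` gives a copy of `pathGraph n`. -/
theorem containsCopy_pathGraph {V : Type*} {G : SimpleGraph V} {n : ℕ} {l : List V}
    (hlen : l.length = n) (hnd : l.Nodup) (hch : l.Chain' G.Adj) :
    ContainsCopy (pathGraph n) G := by
  subst hlen
  refine ⟨fun i => l.get i, List.nodup_iff_injective_get.mp hnd, fun a b hab => ?_⟩
  rw [show l.Chain' G.Adj ↔ l.IsChain G.Adj from Iff.rfl, List.isChain_iff_getElem] at hch
  rw [pathGraph_adj] at hab
  rcases hab with h | h
  · have hb := b.isLt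
    have h2 := hch a.val (by omega)
    have hbe : b = ⟨a.val + 1, by omega⟩ := Fin.ext h.symm
    rw [hbe]
    exact h2
  · have ha := a.isLt
    have h2 := hch b.val (by omega)
    have hae : a = ⟨b.val + 1, by omega⟩ := Fin.ext h.symm
    rw [hae]
    exact h2.symm

theorem adj_single {u v : ℕ} (h : u ≠ v) :
    (fromEdgeSet {s(u, v)} : SimpleGraph ℕ).Adj u v := by
  simp [h]

/-- If at some position of the online Ramsey game (a finite red-blue edge-colored graph,
with red edges `R` and blue edges `B`) the colored graph built so far contains a blue path
`x₁x₂x₃x₄x₅` on five vertices and, vertex-disjoint from it, a graph on distinct vertices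
`v₀,v₁,v₂,v₃,v₄` in which the path `v₀v₁v₄v₃` is blue and the path `v₁v₂v₃` is red,
then Builder can, by drawing at most three further edges, force the colored graph to
contain either a red `P₄` or a blue `P₁₀`. -/
theorem G3_and_G7_give_blue_P10 (R B : SimpleGraph ℕ)
    (hdisj : Disjoint R B) (hRfin : R.edgeSet.Finite) (hBfin : B.edgeSet.Finite)
    (x₁ x₂ x₃ x₄ x₅ v₀ v₁ v₂ v₃ v₄ : ℕ)
    (hnodup : ([x₁, x₂, x₃, x₄, x₅, v₀, v₁, v₂, v₃, v₄] : List ℕ).Nodup)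
    (hx₁₂ : B.Adj x₁ x₂) (hx₂₃ : B.Adj x₂ x₃) (hx₃₄ : B.Adj x₃ x₄) (hx₄₅ : B.Adj x₄ x₅)
    (hv₀₁ : B.Adj v₀ v₁) (hv₁₄ : B.Adj v₁ v₄) (hv₄₃ : B.Adj v₄ v₃)
    (hv₁₂ : R.Adj v₁ v₂) (hv₂₃ : R.Adj v₂ v₃) :
    BuilderWins (pathGraph 4) (pathGraph 10) R B 3 := by
  simp only [List.nodup_cons, List.mem_cons, List.not_mem_nil, not_false_eq_true, or_false, not_or,
    List.nodup_nil, and_true, List.mem_singleton] at hnodup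
  obtain ⟨⟨h01, h02, h03, h04, h05, h06, h07, h08, h09⟩,
    ⟨h12, h13, h14, h15, h16, h17, h18, h19⟩, ⟨h23, h24, h25, h26, h27, h28, h29⟩,
    ⟨h34, h35, h36, h37, h38, h39⟩, ⟨h45, h46, h47, h48, h49⟩, ⟨h56, h57, h58, h59⟩,
    ⟨h67, h68, h69⟩, ⟨h78, h79⟩, h89⟩ := hnodup
  obtain ⟨w, hw⟩ :=
    Infinite.exists_notMem_finset ({x₁, x₂, x₃, x₄, x₅, v₀, v₁, v₂, v₃, v₄} : Finset ℕ)
  simp only [Finset.mem_insert, Finset.mem_singleton, not_or] at hw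
  obtain ⟨hw0, hw1, hw2, hw3, hw4, hw5, hw6, hw7, hw8, hw9⟩ := hw
  -- Move 1 : x₁ – v₀
  refine BuilderWins.draw' x₁ v₀ h05 ?_ ?_
  · -- x₁v₀ red; Move 2 : x₁ – v₂
    refine BuilderWins.draw' x₁ v₂ h07 ?_ ?_
    · -- x₁v₂ red : red path v₀ x₁ v₂ v₁
      refine BuilderWins.red (containsCopy_pathGraph (l := [v₀, x₁, v₂, v₁]) rfl ?_ ?_)
      · simp only [List.nodup_cons, List.mem_cons, List.not_mem_nil, not_false_eq_true, or_false, not_or,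
          List.nodup_nil, and_true, List.mem_singleton]
        exact ⟨⟨(Ne.symm h05), h57, h56⟩, ⟨h07, h06⟩, (Ne.symm h67)⟩
      · simp only [List.Chain', List.isChain_cons_cons, List.isChain_singleton, sup_adj, and_true]
        exact ⟨Or.inl (Or.inr (adj_single h05).symm),
          Or.inr (adj_single h07), Or.inl (Or.inl hv₁₂.symm)⟩
    · -- x₁v₂ blue; Move 3 : x₅ – v₃
      refine BuilderWins.draw' x₅ v₃ h48 ?_ ?_
      · -- x₅v₃ red : red path x₅ v₃ v₂ v₁
        refine BuilderWins.red (containsCopy_pathGraph (l := [x₅, v₃, v₂, v₁]) rfl ?_ ?_)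
        · simp only [List.nodup_cons, List.mem_cons, List.not_mem_nil, not_false_eq_true, or_false, not_or,
            List.nodup_nil, and_true, List.mem_singleton]
          exact ⟨⟨h48, h47, h46⟩, ⟨(Ne.symm h78), (Ne.symm h68)⟩, (Ne.symm h67)⟩
        · simp only [List.Chain', List.isChain_cons_cons, List.isChain_singleton, sup_adj, and_true]
          exact ⟨Or.inr (adj_single h48),
            Or.inl (Or.inl hv₂₃.symm), Or.inl (Or.inl hv₁₂.symm)⟩
      · -- x₅v₃ blue : blue path v₀ v₁ v₄ v₃ x₅ x₄ x₃ x₂ x₁ v₂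
        refine BuilderWins.blue (containsCopy_pathGraph
          (l := [v₀, v₁, v₄, v₃, x₅, x₄, x₃, x₂, x₁, v₂]) rfl ?_ ?_)
        · simp only [List.nodup_cons, List.mem_cons, List.not_mem_nil, not_false_eq_true, or_false, not_or,
            List.nodup_nil, and_true, List.mem_singleton]
          exact ⟨⟨h56, h59, h58, (Ne.symm h45), (Ne.symm h35), (Ne.symm h25), (Ne.symm h15),
              (Ne.symm h05), h57⟩,
            ⟨h69, h68, (Ne.symm h46), (Ne.symm h36), (Ne.symm h26), (Ne.symm h16), (Ne.symm h06), h67⟩,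
            ⟨(Ne.symm h89), (Ne.symm h49), (Ne.symm h39), (Ne.symm h29), (Ne.symm h19), (Ne.symm h09),
              (Ne.symm h79)⟩,
            ⟨(Ne.symm h48), (Ne.symm h38), (Ne.symm h28), (Ne.symm h18), (Ne.symm h08), (Ne.symm h78)⟩,
            ⟨(Ne.symm h34), (Ne.symm h24), (Ne.symm h14), (Ne.symm h04), h47⟩,
            ⟨(Ne.symm h23), (Ne.symm h13), (Ne.symm h03), h37⟩,
            ⟨(Ne.symm h12), (Ne.symm h02), h27⟩, ⟨(Ne.symm h01), h17⟩, h07⟩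
        · simp only [List.Chain', List.isChain_cons_cons, List.isChain_singleton, sup_adj, and_true]
          exact ⟨Or.inl (Or.inl hv₀₁), Or.inl (Or.inl hv₁₄), Or.inl (Or.inl hv₄₃),
            Or.inr (adj_single h48).symm, Or.inl (Or.inl hx₄₅.symm),
            Or.inl (Or.inl hx₃₄.symm), Or.inl (Or.inl hx₂₃.symm),
            Or.inl (Or.inl hx₁₂.symm), Or.inl (Or.inr (adj_single h07))⟩
  · -- x₁v₀ blue; Move 2 : v₃ – w  (w fresh)
    refine BuilderWins.draw' (t := 1) v₃ w (Ne.symm hw8) ?_ ?_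
    · -- v₃w red : red path w v₃ v₂ v₁
      refine BuilderWins.red (containsCopy_pathGraph (l := [w, v₃, v₂, v₁]) rfl ?_ ?_)
      · simp only [List.nodup_cons, List.mem_cons, List.not_mem_nil, not_false_eq_true, or_false, not_or,
          List.nodup_nil, and_true, List.mem_singleton]
        exact ⟨⟨hw8, hw7, hw6⟩, ⟨(Ne.symm h78), (Ne.symm h68)⟩, (Ne.symm h67)⟩
      · simp only [List.Chain', List.isChain_cons_cons, List.isChain_singleton, sup_adj, and_true]
        exact ⟨Or.inr (adj_single (Ne.symm hw8)).symm,
          Or.inl hv₂₃.symm, Or.inl hv₁₂.symm⟩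
    · -- v₃w blue : blue path w v₃ v₄ v₁ v₀ x₁ x₂ x₃ x₄ x₅
      refine BuilderWins.blue (containsCopy_pathGraph
        (l := [w, v₃, v₄, v₁, v₀, x₁, x₂, x₃, x₄, x₅]) rfl ?_ ?_)
      · simp only [List.nodup_cons, List.mem_cons, List.not_mem_nil, not_false_eq_true, or_false, not_or,
          List.nodup_nil, and_true, List.mem_singleton]
        exact ⟨⟨hw8, hw9, hw6, hw5, hw0, hw1, hw2, hw3, hw4⟩,
          ⟨h89, (Ne.symm h68), (Ne.symm h58), (Ne.symm h08), (Ne.symm h18), (Ne.symm h28), (Ne.symm h38),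
            (Ne.symm h48)⟩,
          ⟨(Ne.symm h69), (Ne.symm h59), (Ne.symm h09), (Ne.symm h19), (Ne.symm h29), (Ne.symm h39),
            (Ne.symm h49)⟩,
          ⟨(Ne.symm h56), (Ne.symm h06), (Ne.symm h16), (Ne.symm h26), (Ne.symm h36), (Ne.symm h46)⟩,
          ⟨(Ne.symm h05), (Ne.symm h15), (Ne.symm h25), (Ne.symm h35), (Ne.symm h45)⟩,
          ⟨h01, h02, h03, h04⟩, ⟨h12, h13, h14⟩, ⟨h23, h24⟩, h34⟩
      · simp only [List.Chain', List.isChain_cons_cons, List.isChain_singleton, sup_adj, and_true]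
        exact ⟨Or.inr (adj_single (Ne.symm hw8)).symm, Or.inl (Or.inl hv₄₃.symm),
          Or.inl (Or.inl hv₁₄.symm), Or.inl (Or.inl hv₀₁.symm),
          Or.inl (Or.inr (adj_single h05).symm), Or.inl (Or.inl hx₁₂),
          Or.inl (Or.inl hx₂₃), Or.inl (Or.inl hx₃₄), Or.inl (Or.inl hx₄₅)⟩
end

section
/- Let G be a red-blue edge-colored graph that contains distinct vertices x₀,x₁,x₂,x₃,x₄,x₅ with the edge x₀x₁ colored red and the path x₁x₂x₃x₄x₅ colored blue, distinct vertices v₀,v₁,v₂,v₃,v₄ disjoint from {x₀,…,x₅} with the path v₀v₁v₄v₃ colored blue and the path v₁v₂v₃ colored red, and two further colored edges x₁v₂ and x₅v₃ (each colored red or blue). Then G contains either a red path on 4 vertices or a blue path on 10 vertices. -/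
/-!
If `x₁v₂` is red, `x₀x₁v₂v₃` is a red `P₄`; if `x₅v₃` is red, `x₅v₃v₂v₁` is a red
`P₄`. Otherwise both edges are blue and `v₂x₁x₂x₃x₄x₅v₃v₄v₁v₀` is a blue `P₁₀`.
-/

open SimpleGraph

theorem containsCopy_pathGraph_of_isChain {V : Type*} {G : SimpleGraph V} {l : List V}
    (hl : l.Nodup) (hc : l.IsChain G.Adj) : ContainsCopy (pathGraph l.length) G := by
  refine ⟨fun i => l[(i : ℕ)], fun i j h => Fin.ext (hl.getElem_inj_iff.mp h),
    fun i j h => ?_⟩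
  rcases pathGraph_adj.mp h with h | h
  · simpa only [← h] using hc.getElem i (by omega)
  · simpa only [← h] using (hc.getElem j (by omega)).symm

theorem G6_and_G7_give_blue_P10_general (V : Type*) (R B : SimpleGraph V)
    (x₀ x₁ x₂ x₃ x₄ x₅ v₀ v₁ v₂ v₃ v₄ : V)
    (hnodup : ([x₀, x₁, x₂, x₃, x₄, x₅, v₀, v₁, v₂, v₃, v₄] : List V).Nodup)
    (hred : R.Adj x₀ x₁)
    (hb₁ : B.Adj x₁ x₂) (hb₂ : B.Adj x₂ x₃) (hb₃ : B.Adj x₃ x₄) (hb₄ : B.Adj x₄ x₅)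
    (hb₅ : B.Adj v₀ v₁) (hb₆ : B.Adj v₁ v₄) (hb₇ : B.Adj v₄ v₃)
    (hr₁ : R.Adj v₁ v₂) (hr₂ : R.Adj v₂ v₃)
    (e₁ : R.Adj x₁ v₂ ∨ B.Adj x₁ v₂) (e₂ : R.Adj x₅ v₃ ∨ B.Adj x₅ v₃) :
    ContainsCopy (SimpleGraph.pathGraph 4) R ∨ ContainsCopy (SimpleGraph.pathGraph 10) B := by
  simp only [List.nodup_cons, List.mem_cons, List.not_mem_nil, not_or] at hnodup
  rcases e₁ with e₁ | e₁
  · refine .inl (containsCopy_pathGraph_of_isChain (l := [x₀, x₁, v₂, v₃]) ?_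
      (by simp [hred, e₁, hr₂]))
    simp only [List.nodup_cons, List.mem_cons, List.not_mem_nil, not_or]; grind
  rcases e₂ with e₂ | e₂
  · refine .inl (containsCopy_pathGraph_of_isChain (l := [x₅, v₃, v₂, v₁]) ?_
      (by simp [e₂, hr₂.symm, hr₁.symm]))
    simp only [List.nodup_cons, List.mem_cons, List.not_mem_nil, not_or]; grind
  refine .inr (containsCopy_pathGraph_of_isChain
    (l := [v₂, x₁, x₂, x₃, x₄, x₅, v₃, v₄, v₁, v₀]) ?_
    (by simp [e₁.symm, hb₁, hb₂, hb₃, hb₄, e₂, hb₇.symm, hb₆.symm, hb₅.symm]))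
  simp only [List.nodup_cons, List.mem_cons, List.not_mem_nil, not_or]; grind

/-- Let `G` be a red-blue edge-colored graph (red edges `R`, blue edges `B`) containing
distinct vertices `x₀,…,x₅` with `x₀x₁` red and the path `x₁x₂x₃x₄x₅` blue, distinct
vertices `v₀,…,v₄` disjoint from `{x₀,…,x₅}` with the path `v₀v₁v₄v₃` blue and the path
`v₁v₂v₃` red, together with colored edges `x₁v₂` and `x₅v₃` (each red or blue).
Then `G` contains a red `P₄` or a blue `P₁₀`. -/
theorem G6_and_G7_give_blue_P10 (V : Type*) (R B : SimpleGraph V) (hdisj : Disjoint R B)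
    (x₀ x₁ x₂ x₃ x₄ x₅ v₀ v₁ v₂ v₃ v₄ : V)
    (hnodup : ([x₀, x₁, x₂, x₃, x₄, x₅, v₀, v₁, v₂, v₃, v₄] : List V).Nodup)
    (hred : R.Adj x₀ x₁)
    (hb₁ : B.Adj x₁ x₂) (hb₂ : B.Adj x₂ x₃) (hb₃ : B.Adj x₃ x₄) (hb₄ : B.Adj x₄ x₅)
    (hb₅ : B.Adj v₀ v₁) (hb₆ : B.Adj v₁ v₄) (hb₇ : B.Adj v₄ v₃)
    (hr₁ : R.Adj v₁ v₂) (hr₂ : R.Adj v₂ v₃)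
    (e₁ : R.Adj x₁ v₂ ∨ B.Adj x₁ v₂) (e₂ : R.Adj x₅ v₃ ∨ B.Adj x₅ v₃) :
    ContainsCopy (SimpleGraph.pathGraph 4) R ∨ ContainsCopy (SimpleGraph.pathGraph 10) B :=
  G6_and_G7_give_blue_P10_general V R B x₀ x₁ x₂ x₃ x₄ x₅ v₀ v₁ v₂ v₃ v₄ hnodup hred hb₁ hb₂ hb₃ hb₄
    hb₅ hb₆ hb₇ hr₁ hr₂ e₁ e₂
end

section
/- Let k ≥ 2 and let G be a red-blue edge-colored graph that contains a blue path on k vertices with end vertices x and y, a vertex-disjoint path v₁v₂v₃v₄ whose edges v₁v₂ and v₃v₄ are blue and whose edge v₂v₃ is red, the edge xv₂ colored red, and two further colored edges yv₃ and xv₁ (each colored red or blue). Then G contains either a red path on 4 vertices or a blue path on k+4 vertices. -/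
open SimpleGraph

lemma containsCopy_of_list {V : Type*} (G : SimpleGraph V) (n : ℕ) (l : List V)
    (hl : l.length = n) (hn : l.Nodup) (hc : l.Chain' G.Adj) :
    ContainsCopy (SimpleGraph.pathGraph n) G := by
  refine ⟨fun i => l.get (Fin.cast hl.symm i), ?_, ?_⟩
  · intro i j hij
    have := List.nodup_iff_injective_get.mp hn hij
    exact Fin.cast_injective _ (by exact this)
  · intro a b hab
    rw [pathGraph_adj] at hab
    have key : ∀ (i : ℕ) (h : i < l.length - 1),
        G.Adj (l.get ⟨i, by omega⟩) (l.get ⟨i + 1, by omega⟩) :=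
      fun i h => by simpa using List.isChain_iff_getElem.mp hc i (by omega)
    rcases hab with h | h
    · have := key a.val (by omega)
      convert this using 3 <;> simp [Fin.cast] <;> omega
    · exact (by convert key b.val (by omega) using 3 <;> simp [Fin.cast] <;> omega :
        G.Adj (l.get (Fin.cast hl.symm b)) (l.get (Fin.cast hl.symm a))).symm

lemma containsCopy_path4 {V : Type*} (R : SimpleGraph V) (a b c d : V)
    (h : ([a, b, c, d] : List V).Nodup)
    (hab : R.Adj a b) (hbc : R.Adj b c) (hcd : R.Adj c d) :
    ContainsCopy (SimpleGraph.pathGraph 4) R :=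
  containsCopy_of_list R 4 [a, b, c, d] rfl h (by
    simp [List.Chain', List.isChain_cons_cons, hab, hbc, hcd])

lemma nodup_aux {V : Type*} (k : ℕ) (w : Fin k → V) (v₁ v₂ v₃ v₄ : V)
    (hw : Function.Injective w)
    (h12 : v₁ ≠ v₂) (h13 : v₁ ≠ v₃) (h14 : v₁ ≠ v₄) (h23 : v₂ ≠ v₃) (h24 : v₂ ≠ v₄)
    (h34 : v₃ ≠ v₄)
    (hwv : ∀ i, w i ∉ ({v₁, v₂, v₃, v₄} : Set V)) :
    (v₂ :: v₁ :: (List.ofFn w ++ [v₃, v₄])).Nodup := by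
  have h1 : ∀ i, w i ≠ v₁ := fun i => by have := hwv i; simp at this; tauto
  have h2 : ∀ i, w i ≠ v₂ := fun i => by have := hwv i; simp at this; tauto
  have h3 : ∀ i, w i ≠ v₃ := fun i => by have := hwv i; simp at this; tauto
  have h4 : ∀ i, w i ≠ v₄ := fun i => by have := hwv i; simp at this; tauto
  simp only [List.nodup_cons, List.mem_cons, List.mem_append, List.mem_ofFn, List.mem_singleton,
    List.not_mem_nil, or_false, not_or, List.nodup_append, List.nodup_ofFn, Set.mem_range]
  refine ⟨⟨h12.symm, fun ⟨i, hi⟩ => h2 i hi, h23, h24⟩, ⟨fun ⟨i, hi⟩ => h1 i hi, h13, h14⟩,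
    hw, by simp [h34], ?_⟩
  intro a ha b hb
  obtain ⟨i, rfl⟩ := ha
  rcases hb with rfl | rfl
  exacts [h3 i, h4 i]

/-- Pattern `brb` of Lemma 4 (subcase `xv₂` red): let `k ≥ 2` and let `G` be a red-blue
edge-colored graph (red edges `R`, blue edges `B`) containing a blue path `w₁…w_k` with
ends `x = w₁` and `y = w_k`, a vertex-disjoint path `v₁v₂v₃v₄` with `v₁v₂`, `v₃v₄` blue
and `v₂v₃` red, the edge `xv₂` colored red, and further colored edges `yv₃` and `xv₁`
(each red or blue). Then `G` contains a red `P₄` or a blue `P_{k+4}`. -/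
theorem lemma_pattern_brb (V : Type*) (R B : SimpleGraph V) (hdisj : Disjoint R B)
    (k : ℕ) (hk : 2 ≤ k) (w : Fin k → V) (v₁ v₂ v₃ v₄ : V)
    (hw : Function.Injective w)
    (hvnodup : ([v₁, v₂, v₃, v₄] : List V).Nodup)
    (hwv : ∀ i, w i ∉ ({v₁, v₂, v₃, v₄} : Set V))
    (hwpath : ∀ i j : Fin k, (j : ℕ) = (i : ℕ) + 1 → B.Adj (w i) (w j))
    (hb₁ : B.Adj v₁ v₂) (hr₁ : R.Adj v₂ v₃) (hb₂ : B.Adj v₃ v₄)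
    (hr₂ : R.Adj (w ⟨0, by omega⟩) v₂)
    (e₁ : R.Adj (w ⟨k - 1, by omega⟩) v₃ ∨ B.Adj (w ⟨k - 1, by omega⟩) v₃)
    (e₂ : R.Adj (w ⟨0, by omega⟩) v₁ ∨ B.Adj (w ⟨0, by omega⟩) v₁) :
    ContainsCopy (SimpleGraph.pathGraph 4) R ∨ ContainsCopy (SimpleGraph.pathGraph (k + 4)) B := by
  set x := w ⟨0, by omega⟩ with hx
  set y := w ⟨k - 1, by omega⟩ with hy
  have hxv : x ∉ ({v₁, v₂, v₃, v₄} : Set V) := hwv _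
  have hyv : y ∉ ({v₁, v₂, v₃, v₄} : Set V) := hwv _
  simp only [Set.mem_insert_iff, Set.mem_singleton_iff, not_or] at hxv hyv
  have hxy : x ≠ y := by
    intro h
    have := hw h
    simp only [Fin.mk.injEq] at this
    omega
  simp only [List.nodup_cons, List.mem_cons, List.not_mem_nil, or_false,
    List.mem_singleton, List.nodup_nil, and_true, not_or] at hvnodup
  rcases e₂ with e₂ | e₂
  ·
    left
    refine containsCopy_path4 R v₃ v₂ x v₁ ?_ hr₁.symm hr₂.symm e₂
    simp only [List.nodup_cons, List.mem_cons, List.not_mem_nil, or_false,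
      List.mem_singleton, List.nodup_nil, and_true, not_or]
    refine ⟨⟨?_, ?_, ?_⟩, ⟨?_, ?_⟩, ?_⟩ <;> tauto
  · rcases e₁ with e₁ | e₁
    · -- red P₄ : y v₃ v₂ x
      left
      refine containsCopy_path4 R y v₃ v₂ x ?_ e₁ hr₁.symm hr₂.symm
      simp only [List.nodup_cons, List.mem_cons, List.not_mem_nil, or_false,
        List.mem_singleton, List.nodup_nil, and_true, not_or]
      refine ⟨⟨?_, ?_, ?_⟩, ⟨?_, ?_⟩, ?_⟩ <;> tauto
    · -- blue P_{k+4} : v₂ v₁ x … y v₃ v₄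
      right
      refine containsCopy_of_list B (k + 4) (v₂ :: v₁ :: (List.ofFn w ++ [v₃, v₄])) ?_ ?_ ?_
      · simp only [List.length_cons, List.length_append, List.length_ofFn, List.length_nil]
      · exact nodup_aux k w v₁ v₂ v₃ v₄ hw (by tauto) (by tauto) (by tauto) (by tauto)
          (by tauto) (by tauto) hwv
      · rw [List.Chain', List.isChain_cons_cons, List.isChain_cons]
        refine ⟨hb₁.symm, ?_, ?_⟩
        · intro z hz
          have hhead : (List.ofFn w ++ [v₃, v₄]).head? = some (w ⟨0, by omega⟩) := by
            rcases k with _ | k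
            · omega
            · simp [List.ofFn_succ]
          rw [hhead] at hz
          cases hz
          exact e₂.symm
        · rw [List.isChain_append]
          refine ⟨?_, ?_, ?_⟩
          · rw [List.isChain_iff_getElem]
            intro i hi
            simp only [List.length_ofFn] at hi
            rw [List.getElem_ofFn, List.getElem_ofFn]
            exact hwpath _ _ (by simp)
          · simp [hb₂]
          · intro a ha b hb
            have hlast : (List.ofFn w).getLast? = some (w ⟨k - 1, by omega⟩) := by
              have hne : List.ofFn w ≠ [] := by
                simp [List.ofFn_eq_nil_iff]; omega
              rw [List.getLast?_eq_getLast hne, List.getLast_eq_getElem]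
              congr 1
              rw [List.getElem_ofFn]
              congr 1
              simp [Fin.ext_iff]
            rw [hlast] at ha
            cases ha
            simp only [List.head?_cons, Option.mem_some_iff] at hb
            subst hb
            exact e₁
end
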